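/- arXiv:1203.0477 — 4 statements merged into one kernel-verified Lean document; each statement's English description precedes it below -/
import Mathlib

section
/- Let β ∈ (0, 1). There exists a constant C > 0 such that for every x > 0 and every ε > 0, ∫_ℝ |x + ε y|^{−β} dγ(y) ≤ C · min(ε^{−β}, x^{−β}), where γ is the standard Gaussian measure on ℝ. -/
/-!
Writing `x + ε y = ε (a + y)` with `a = x / ε`, it suffices to bound `E|a + Y|^(-β)` both by a
constant and by a constant times `a^(-β)`. Split the integral at `|a + y| = r`: away from the
singularity the integrand is at most `r^(-β)`; near it the Gaussian density is at most `1`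
(take `r = 1`), or at most `exp (-a² / 8)` when `r = a / 2`, because then `|y| > a / 2`. What is
left is the Lebesgue integral `∫_{|u| < r} |u|^(-β) du = 2 r^(1-β) / (1 - β)`, finite since
`β < 1`, and for `r = a / 2` the factor `r` is absorbed by `r exp (-r² / 2) ≤ 1`.
-/

open MeasureTheory ProbabilityTheory Real Set

lemma lintegral_Ioo_abs_rpow_neg {β : ℝ} (hβ : β < 1) {r : ℝ} (hr : 0 < r) :
    ∫⁻ u in Ioo (-r) r, ENNReal.ofReal (|u| ^ (-β)) =
      ENNReal.ofReal (2 * (r ^ (1 - β) / (1 - β))) := by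
  set f : ℝ → ℝ := (Iio r).indicator fun u => u ^ (-β)
  have half : ∫ u in Ioi 0, f u = r ^ (1 - β) / (1 - β) := by
    rw [setIntegral_indicator measurableSet_Iio, Ioi_inter_Iio, ← integral_Ioc_eq_integral_Ioo,
      ← intervalIntegral.integral_of_le hr.le, integral_rpow (Or.inl (by linarith)),
      zero_rpow (by linarith), sub_zero, neg_add_eq_sub]
  have hint : ∫ u, f |u| = 2 * (r ^ (1 - β) / (1 - β)) := by
    rw [integral_comp_abs, half]
  have hpos : 0 < 2 * (r ^ (1 - β) / (1 - β)) := by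
    have : 0 < 1 - β := by linarith
    positivity
  have hf_nonneg : ∀ u, 0 ≤ f |u| := fun u =>
    indicator_nonneg (fun _ _ => rpow_nonneg (abs_nonneg u) _) _
  -- integrability comes for free: the Bochner integral computed above is nonzero
  rw [← hint, ofReal_integral_eq_lintegral_ofReal
    (Integrable.of_integral_ne_zero (hint ▸ hpos.ne')) (ae_of_all _ hf_nonneg),
    ← lintegral_indicator measurableSet_Ioo]
  congr 1 with u
  simp only [f, indicator_apply, mem_Iio, mem_Ioo, abs_lt]
  split_ifs <;> simp

lemma setLIntegral_abs_add_rpow_neg {β : ℝ} (hβ : β < 1) (a : ℝ) {r : ℝ} (hr : 0 < r) :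
    ∫⁻ y in {y | |a + y| < r}, ENNReal.ofReal (|a + y| ^ (-β)) =
      ENNReal.ofReal (2 * (r ^ (1 - β) / (1 - β))) := by
  have hpre : {y : ℝ | |a + y| < r} = (a + ·) ⁻¹' Ioo (-r) r := by
    ext y
    simp only [mem_ofPred_eq, mem_preimage, mem_Ioo, abs_lt]
  rw [hpre, ← lintegral_Ioo_abs_rpow_neg hβ hr]
  exact (measurePreserving_add_left volume a).setLIntegral_comp_preimage measurableSet_Ioo
    (f := fun u => ENNReal.ofReal (|u| ^ (-β))) (by fun_prop)

lemma lintegral_abs_add_rpow_neg_le {β : ℝ} (hβ₀ : 0 ≤ β) (hβ₁ : β < 1) (μ : Measure ℝ)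
    [IsProbabilityMeasure μ] (a : ℝ) {r : ℝ} (hr : 0 < r) {M : ENNReal}
    (hμ : μ.restrict {y | |a + y| < r} ≤ M • volume.restrict {y | |a + y| < r}) :
    ∫⁻ y, ENNReal.ofReal (|a + y| ^ (-β)) ∂μ ≤
      M * ENNReal.ofReal (2 * (r ^ (1 - β) / (1 - β))) + ENNReal.ofReal (r ^ (-β)) := by
  have hS : MeasurableSet {y : ℝ | |a + y| < r} := measurableSet_lt (by fun_prop) measurable_const
  rw [← lintegral_add_compl _ hS]
  gcongr
  · calc ∫⁻ y in {y | |a + y| < r}, ENNReal.ofReal (|a + y| ^ (-β)) ∂μ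
        ≤ ∫⁻ y, ENNReal.ofReal (|a + y| ^ (-β)) ∂(M • volume.restrict {y | |a + y| < r}) :=
          lintegral_mono' hμ le_rfl
      _ = M * ENNReal.ofReal (2 * (r ^ (1 - β) / (1 - β))) := by
          rw [lintegral_smul_measure, setLIntegral_abs_add_rpow_neg hβ₁ a hr, smul_eq_mul]
  · calc ∫⁻ y in {y | |a + y| < r}ᶜ, ENNReal.ofReal (|a + y| ^ (-β)) ∂μ
        ≤ ∫⁻ _ in {y | |a + y| < r}ᶜ, ENNReal.ofReal (r ^ (-β)) ∂μ :=
          setLIntegral_mono measurable_const fun y hy => ENNReal.ofReal_le_ofReal <|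
            rpow_le_rpow_of_nonpos hr (not_lt.1 hy) (neg_nonpos.2 hβ₀)
      _ ≤ ENNReal.ofReal (r ^ (-β)) := by
          rw [setLIntegral_const]
          exact mul_le_of_le_one_right' prob_le_one

lemma gaussianReal_restrict_le {s : Set ℝ} (hs : MeasurableSet s) {c : ℝ}
    (hc : ∀ y ∈ s, c ≤ y ^ 2) :
    (gaussianReal 0 1).restrict s ≤ ENNReal.ofReal (exp (-c / 2)) • volume.restrict s := by
  rw [gaussianReal_of_var_ne_zero 0 one_ne_zero, restrict_withDensity hs, ← withDensity_const]
  refine withDensity_mono ((ae_restrict_iff' hs).2 (ae_of_all _ fun y hy => ?_))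
  have hsqrt : 1 ≤ √(2 * π) := by
    rw [one_le_sqrt]
    linarith [pi_gt_three]
  refine ENNReal.ofReal_le_ofReal ?_
  simp only [gaussianPDFReal, NNReal.coe_one, sub_zero, mul_one]
  calc (√(2 * π))⁻¹ * exp (-y ^ 2 / 2) ≤ 1 * exp (-c / 2) := by
        gcongr
        · exact inv_le_one_of_one_le₀ hsqrt
        · exact hc y hy
    _ = exp (-c / 2) := one_mul _

lemma mul_exp_neg_sq_div_two_le_one (a : ℝ) : a * exp (-a ^ 2 / 2) ≤ 1 := by
  rw [neg_div, exp_neg, ← div_eq_mul_inv, div_le_one (exp_pos _)]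
  nlinarith [add_one_le_exp (a ^ 2 / 2), sq_nonneg (a - 1)]

lemma div_two_rpow_neg_le {a β : ℝ} (ha : 0 ≤ a) (hβ : β ≤ 1) :
    (a / 2) ^ (-β) ≤ 2 * a ^ (-β) := by
  rw [div_rpow ha zero_le_two, rpow_neg zero_le_two, div_inv_eq_mul, mul_comm]
  gcongr
  calc (2 : ℝ) ^ β ≤ 2 ^ (1 : ℝ) := rpow_le_rpow_of_exponent_le one_le_two hβ
    _ = 2 := rpow_one 2

lemma lintegral_abs_add_rpow_neg_gaussianReal_le {β : ℝ} (hβ₀ : 0 ≤ β) (hβ₁ : β < 1) (a : ℝ) :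
    ∫⁻ y, ENNReal.ofReal (|a + y| ^ (-β)) ∂gaussianReal 0 1 ≤
      ENNReal.ofReal (1 + 2 / (1 - β)) := by
  have hM := gaussianReal_restrict_le (measurableSet_lt (by fun_prop) measurable_const)
    (c := 0) (s := {y | |a + y| < 1}) fun y _ => sq_nonneg y
  refine (lintegral_abs_add_rpow_neg_le hβ₀ hβ₁ _ a one_pos hM).trans_eq ?_
  have : 0 < 1 - β := by linarith
  rw [neg_zero, zero_div, exp_zero, ENNReal.ofReal_one, one_mul, one_rpow, one_rpow,
    ← ENNReal.ofReal_add (by positivity) zero_le_one]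
  ring_nf

lemma lintegral_abs_add_rpow_neg_gaussianReal_le_rpow {β : ℝ} (hβ₀ : 0 ≤ β) (hβ₁ : β < 1)
    {a : ℝ} (ha : 0 < a) :
    ∫⁻ y, ENNReal.ofReal (|a + y| ^ (-β)) ∂gaussianReal 0 1 ≤
      ENNReal.ofReal (2 * (1 + 2 / (1 - β)) * a ^ (-β)) := by
  set b := a / 2 with hb_def
  have hb : 0 < b := by positivity
  have hM := gaussianReal_restrict_le (measurableSet_lt (by fun_prop) measurable_const)
    (c := b ^ 2) (s := {y | |a + y| < b}) fun y hy => by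
      have := abs_lt.1 (mem_ofPred_eq.mp hy)
      nlinarith
  refine (lintegral_abs_add_rpow_neg_le hβ₀ hβ₁ _ a hb hM).trans ?_
  have h1β : 0 < 1 - β := by linarith
  set t := b ^ (-β)
  have ht : 0 ≤ t := rpow_nonneg hb.le _
  rw [← ENNReal.ofReal_mul (exp_pos _).le, ← ENNReal.ofReal_add (by positivity) ht,
    sub_eq_add_neg 1 β, rpow_add hb, rpow_one, ← sub_eq_add_neg]
  refine ENNReal.ofReal_le_ofReal ?_
  calc exp (-b ^ 2 / 2) * (2 * (b * t / (1 - β))) + t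
      = t * (1 + 2 * (b * exp (-b ^ 2 / 2)) / (1 - β)) := by ring
    _ ≤ t * (1 + 2 * 1 / (1 - β)) := by gcongr; exact mul_exp_neg_sq_div_two_le_one b
    _ ≤ 2 * a ^ (-β) * (1 + 2 / (1 - β)) := by
        gcongr
        · exact div_two_rpow_neg_le ha.le hβ₁.le
        · rw [mul_one]
    _ = 2 * (1 + 2 / (1 - β)) * a ^ (-β) := by ring

lemma lintegral_abs_add_mul_rpow_neg (μ : Measure ℝ) (β x : ℝ) {ε : ℝ} (hε : 0 < ε) :
    ∫⁻ y, ENNReal.ofReal (|x + ε * y| ^ (-β)) ∂μ =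
      ENNReal.ofReal (ε ^ (-β)) * ∫⁻ y, ENNReal.ofReal (|x / ε + y| ^ (-β)) ∂μ := by
  rw [← lintegral_const_mul _ (by fun_prop)]
  congr 1 with y
  rw [← ENNReal.ofReal_mul (rpow_nonneg hε.le _), ← mul_rpow hε.le (abs_nonneg _),
    ← abs_of_pos hε, ← abs_mul, abs_of_pos hε, mul_add, mul_div_cancel₀ x hε.ne']

/-- For `β ∈ (0,1)` there is a constant `C > 0` such that for all `x > 0`, `ε > 0`,
`E|x + ε X|^{-β} ≤ C min(ε^{-β}, x^{-β})` where `X` is standard Gaussian. -/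
theorem gaussian_negative_moment_bound (β : ℝ) (hβ : β ∈ Set.Ioo (0 : ℝ) 1) :
    ∃ C : ℝ, 0 < C ∧ ∀ x ε : ℝ, 0 < x → 0 < ε →
      ∫⁻ y : ℝ, ENNReal.ofReal (|x + ε * y| ^ (-β)) ∂(gaussianReal 0 1) ≤
        ENNReal.ofReal (C * min (ε ^ (-β)) (x ^ (-β))) := by
  obtain ⟨hβ₀, hβ₁⟩ := hβ
  have h1β : 0 < 1 - β := by linarith
  refine ⟨2 * (1 + 2 / (1 - β)), by positivity, fun x ε hx hε => ?_⟩
  have hεβ : 0 ≤ ε ^ (-β) := rpow_nonneg hε.le _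
  rw [lintegral_abs_add_mul_rpow_neg _ _ _ hε, mul_min_of_nonneg _ _ (by positivity),
    ENNReal.ofReal_min]
  refine le_min ?_ ?_
  · calc _ ≤ ENNReal.ofReal (ε ^ (-β)) * ENNReal.ofReal (1 + 2 / (1 - β)) := by
          gcongr; exact lintegral_abs_add_rpow_neg_gaussianReal_le hβ₀.le hβ₁ _
      _ ≤ ENNReal.ofReal (2 * (1 + 2 / (1 - β)) * ε ^ (-β)) := by
          rw [← ENNReal.ofReal_mul hεβ]
          refine ENNReal.ofReal_le_ofReal ?_
          nlinarith [mul_nonneg hεβ (by positivity : (0 : ℝ) ≤ 1 + 2 / (1 - β))]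
  · calc _ ≤ ENNReal.ofReal (ε ^ (-β)) *
            ENNReal.ofReal (2 * (1 + 2 / (1 - β)) * (x / ε) ^ (-β)) := by
          gcongr; exact lintegral_abs_add_rpow_neg_gaussianReal_le_rpow hβ₀.le hβ₁ (by positivity)
      _ = ENNReal.ofReal (2 * (1 + 2 / (1 - β)) * x ^ (-β)) := by
          rw [← ENNReal.ofReal_mul hεβ, mul_left_comm, ← mul_rpow hε.le (by positivity),
            mul_div_cancel₀ x hε.ne']
end

section
/- Let β ∈ (0, 1). There exists a constant C > 0 such that for all ε > 0, ε′ > 0 and all x₁, x₂ ∈ ℝ with x₁ ≠ x₂, ∫_{ℝ²} p_ε(x₁ + y₁) p_{ε′}(x₂ + y₂) |y₁ − y₂|^{−β} dy₁ dy₂ ≤ C |x₁ − x₂|^{−β}. -/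
open MeasureTheory

/-- The one-dimensional heat kernel `p_ε(x) = (2πε)^{-1/2} exp(-x²/(2ε))`. -/
noncomputable def heatKernel (ε x : ℝ) : ℝ :=
  (2 * Real.pi * ε) ^ (-(1 : ℝ) / 2) * Real.exp (-x ^ 2 / (2 * ε))

/-!
The two variables are integrated out one after the other, each time by the same
one-dimensional estimate: if `∫ f ≤ 1` and `f z ≤ 1/|z|`, then
`∫ f(z) |z - c|^{-β} dz ≤ K |c|^{-β}` with `K = 2^β (1 + 2/(1-β))`.
Where `|z - c| ≥ |c|/2` the weight is at most `(|c|/2)^{-β}` and `f` has mass at most one;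
where `|z - c| < |c|/2` we have `|z| > |c|/2`, so `f < 2/|c|`, while the weight integrates to
`2 (|c|/2)^{1-β}/(1-β)` over that interval. The heat kernel is a probability density with
`p_ε(z) |z| ≤ 1` for every `ε` (because `z² e^{-z²/ε} ≤ ε`), so Tonelli and two applications
of the estimate give the bound with `C = K²`.
-/

open Set ProbabilityTheory
open scoped ENNReal

section SingularWeight

/- In `ℝ` the weight `|w| ^ (-β)` takes the junk value `0` at `w = 0`, in `ℝ≥0∞` the value `⊤`;
the estimates below are stated in `ℝ≥0∞`, which makes them hold for `c = 0` as well. -/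
theorem ofReal_abs_rpow_le_enorm_rpow (x p : ℝ) : ENNReal.ofReal (|x| ^ p) ≤ ‖x‖ₑ ^ p := by
  rcases eq_or_ne x 0 with rfl | hx
  · rcases eq_or_ne p 0 with rfl | hp
    · simp
    · simp [Real.zero_rpow hp]
  · rw [Real.enorm_eq_ofReal_abs, ENNReal.ofReal_rpow_of_pos (abs_pos.2 hx)]

theorem ofReal_mul_mul_abs_rpow_le {u v : ℝ} (hu : 0 ≤ u) (hv : 0 ≤ v) (w p : ℝ) :
    ENNReal.ofReal (u * v * |w| ^ p) ≤ ENNReal.ofReal u * ‖w‖ₑ ^ p * ENNReal.ofReal v := by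
  rw [ENNReal.ofReal_mul (mul_nonneg hu hv), ENNReal.ofReal_mul hu, mul_right_comm]
  gcongr
  exact ofReal_abs_rpow_le_enorm_rpow w p

variable {β a : ℝ}

theorem lintegral_Ioo_zero_enorm_rpow_neg (hβ : β < 1) (ha : 0 < a) :
    ∫⁻ t in Ioo 0 a, ‖t‖ₑ ^ (-β) = ENNReal.ofReal (a ^ (1 - β) / (1 - β)) := by
  have hint : IntegrableOn (fun t : ℝ => t ^ (-β)) (Ioo 0 a) :=
    (intervalIntegral.integrableOn_Ioo_rpow_iff ha).2 (by linarith)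
  calc ∫⁻ t in Ioo 0 a, ‖t‖ₑ ^ (-β) = ∫⁻ t in Ioo 0 a, ENNReal.ofReal (t ^ (-β)) := by
        refine setLIntegral_congr_fun measurableSet_Ioo fun t ht => ?_
        rw [Real.enorm_eq_ofReal_abs, abs_of_pos ht.1, ENNReal.ofReal_rpow_of_pos ht.1]
    _ = ENNReal.ofReal (∫ t in Ioo 0 a, t ^ (-β)) :=
        (ofReal_integral_eq_lintegral_ofReal hint
          ((ae_restrict_mem measurableSet_Ioo).mono fun t ht => Real.rpow_nonneg ht.1.le _)).symm
    _ = ENNReal.ofReal (a ^ (1 - β) / (1 - β)) := by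
        rw [← integral_Ioc_eq_integral_Ioo, ← intervalIntegral.integral_of_le ha.le,
          integral_rpow (Or.inl (by linarith)), Real.zero_rpow (by linarith), sub_zero,
          neg_add_eq_sub]

theorem lintegral_Ioo_enorm_rpow_neg (hβ : β < 1) (ha : 0 < a) :
    ∫⁻ w in Ioo (-a) a, ‖w‖ₑ ^ (-β) = ENNReal.ofReal (2 * (a ^ (1 - β) / (1 - β))) := by
  have hneg : ∫⁻ w in Ioo (-a) 0, ‖w‖ₑ ^ (-β) = ∫⁻ t in Ioo 0 a, ‖t‖ₑ ^ (-β) := by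
    have := (Measure.measurePreserving_neg (volume : Measure ℝ)).setLIntegral_comp_preimage
      measurableSet_Ioo (f := fun t : ℝ => ‖t‖ₑ ^ (-β)) (s := Ioo 0 a) (by fun_prop)
    simpa using this
  have hdisj : Disjoint (Ioo (-a) 0) (Ico 0 a) :=
    (Iio_disjoint_Ici le_rfl).mono Ioo_subset_Iio_self Ico_subset_Ici_self
  rw [← Ioo_union_Ico_eq_Ioo (neg_lt_zero.2 ha) ha.le, lintegral_union measurableSet_Ico hdisj,
    hneg, setLIntegral_congr Ioo_ae_eq_Ico.symm, lintegral_Ioo_zero_enorm_rpow_neg hβ ha,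
    ← ENNReal.ofReal_add (by positivity) (by positivity), two_mul]

theorem mul_enorm_sub_rpow_neg_le {x : ℝ≥0∞} {z c : ℝ} (hx : x ≤ ‖z‖ₑ⁻¹) (hβ : 0 ≤ β)
    (ha : 0 < a) (hac : 2 * a ≤ |c|) :
    x * ‖z - c‖ₑ ^ (-β) ≤
      x * ENNReal.ofReal (a ^ (-β)) +
        ENNReal.ofReal a⁻¹ * (Ioo (-a) a).indicator (fun w => ‖w‖ₑ ^ (-β)) (z - c) := by
  by_cases hz : |z - c| < a
  · have hza : a ≤ |z| := by
      have := abs_sub_abs_le_abs_sub c z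
      rw [abs_sub_comm c z] at this
      linarith
    have hxa : x ≤ ENNReal.ofReal a⁻¹ := by
      rw [ENNReal.ofReal_inv_of_pos ha]
      refine hx.trans (ENNReal.inv_le_inv.2 ?_)
      rw [Real.enorm_eq_ofReal_abs]
      exact ENNReal.ofReal_le_ofReal hza
    rw [indicator_of_mem (show z - c ∈ Ioo (-a) a from abs_lt.1 hz)]
    exact (mul_le_mul_left hxa _).trans le_add_self
  · have hfar : ‖z - c‖ₑ ^ (-β) ≤ ENNReal.ofReal (a ^ (-β)) := by
      rw [← ENNReal.ofReal_rpow_of_pos ha, ENNReal.rpow_neg, ENNReal.rpow_neg,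
        Real.enorm_eq_ofReal_abs]
      gcongr
      exact not_lt.1 hz
    exact (mul_le_mul_right hfar _).trans le_self_add

theorem lintegral_mul_enorm_sub_rpow_neg_le {f : ℝ → ℝ≥0∞} (hf_int : ∫⁻ z, f z ≤ 1)
    (hf_le : ∀ z, f z ≤ ‖z‖ₑ⁻¹) (hβ : β ∈ Ioo 0 1) (c : ℝ) :
    ∫⁻ z, f z * ‖z - c‖ₑ ^ (-β) ≤ ENNReal.ofReal (2 ^ β * (1 + 2 / (1 - β))) * ‖c‖ₑ ^ (-β) := by
  obtain ⟨hβ0, hβ1⟩ := hβ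
  have h1β : 0 < 1 - β := by linarith
  rcases eq_or_ne c 0 with rfl | hc
  · have hC : 0 < 2 ^ β * (1 + 2 / (1 - β)) := by positivity
    simp [ENNReal.zero_rpow_of_neg (neg_neg_of_pos hβ0), ENNReal.mul_top, hC]
  set a := |c| / 2 with ha_def
  have ha : 0 < a := by positivity
  set g : ℝ → ℝ≥0∞ := (Ioo (-a) a).indicator fun w => ‖w‖ₑ ^ (-β)
  have hg : Measurable fun z => g (z - c) :=
    (Measurable.indicator (by fun_prop) measurableSet_Ioo).comp (measurable_id.sub_const c)
  calc ∫⁻ z, f z * ‖z - c‖ₑ ^ (-β)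
      ≤ ∫⁻ z, (f z * ENNReal.ofReal (a ^ (-β)) + ENNReal.ofReal a⁻¹ * g (z - c)) :=
        lintegral_mono fun z => mul_enorm_sub_rpow_neg_le (hf_le z) hβ0.le ha (by linarith)
    _ = (∫⁻ z, f z) * ENNReal.ofReal (a ^ (-β)) + ENNReal.ofReal a⁻¹ * ∫⁻ w, g w := by
        rw [lintegral_add_right _ (hg.const_mul _), lintegral_mul_const' _ _ ENNReal.ofReal_ne_top,
          lintegral_const_mul' _ _ ENNReal.ofReal_ne_top, lintegral_sub_right_eq_self g c]
    _ ≤ ENNReal.ofReal (a ^ (-β)) + ENNReal.ofReal a⁻¹ *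
          ENNReal.ofReal (2 * (a ^ (1 - β) / (1 - β))) := by
        rw [lintegral_indicator measurableSet_Ioo, lintegral_Ioo_enorm_rpow_neg hβ1 ha]
        gcongr
        exact mul_le_of_le_one_left' hf_int
    _ = ENNReal.ofReal (2 ^ β * (1 + 2 / (1 - β))) * ‖c‖ₑ ^ (-β) := by
        rw [Real.enorm_eq_ofReal_abs, ENNReal.ofReal_rpow_of_pos (abs_pos.2 hc),
          ← ENNReal.ofReal_mul (by positivity), ← ENNReal.ofReal_mul (by positivity),
          ← ENNReal.ofReal_add (by positivity) (by positivity)]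
        congr 1
        rw [show |c| = 2 * a by rw [ha_def]; ring, Real.mul_rpow zero_le_two ha.le,
          Real.rpow_neg zero_le_two, show 1 - β = 1 + -β by ring, Real.rpow_add ha, Real.rpow_one]
        field_simp

theorem lintegral_prod_mul_enorm_sub_sub_rpow_neg_le {f g : ℝ → ℝ≥0∞} (hf : Measurable f)
    (hg : Measurable g) (hf_int : ∫⁻ z, f z ≤ 1) (hg_int : ∫⁻ z, g z ≤ 1)
    (hf_le : ∀ z, f z ≤ ‖z‖ₑ⁻¹) (hg_le : ∀ z, g z ≤ ‖z‖ₑ⁻¹) (hβ : β ∈ Ioo 0 1) (c : ℝ) :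
    ∫⁻ y : ℝ × ℝ, f y.1 * ‖y.1 - y.2 - c‖ₑ ^ (-β) * g y.2 ≤
      ENNReal.ofReal (2 ^ β * (1 + 2 / (1 - β))) ^ 2 * ‖c‖ₑ ^ (-β) := by
  set K := ENNReal.ofReal (2 ^ β * (1 + 2 / (1 - β)))
  have hmeas : Measurable fun y : ℝ × ℝ => f y.1 * ‖y.1 - y.2 - c‖ₑ ^ (-β) * g y.2 := by
    fun_prop
  calc ∫⁻ y : ℝ × ℝ, f y.1 * ‖y.1 - y.2 - c‖ₑ ^ (-β) * g y.2
      = ∫⁻ y₂, (∫⁻ y₁, f y₁ * ‖y₁ - (y₂ + c)‖ₑ ^ (-β)) * g y₂ := by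
        rw [Measure.volume_eq_prod, lintegral_prod_symm _ hmeas.aemeasurable]
        refine lintegral_congr fun y₂ => ?_
        simp_rw [sub_sub]
        exact lintegral_mul_const _ (by fun_prop)
    _ ≤ ∫⁻ y₂, K * ‖y₂ - -c‖ₑ ^ (-β) * g y₂ := by
        gcongr with y₂
        rw [sub_neg_eq_add]
        exact lintegral_mul_enorm_sub_rpow_neg_le hf_int hf_le hβ _
    _ = K * ∫⁻ y₂, g y₂ * ‖y₂ - -c‖ₑ ^ (-β) := by
        rw [← lintegral_const_mul' K _ ENNReal.ofReal_ne_top]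
        simp_rw [mul_comm (g _), mul_assoc]
    _ ≤ K * (K * ‖-c‖ₑ ^ (-β)) := by
        gcongr
        exact lintegral_mul_enorm_sub_rpow_neg_le hg_int hg_le hβ _
    _ = K ^ 2 * ‖c‖ₑ ^ (-β) := by
        rw [enorm_neg, ← mul_assoc, sq]

end SingularWeight

section HeatKernel

variable {ε : ℝ}

theorem heatKernel_eq_gaussianPDFReal (hε : 0 ≤ ε) (x : ℝ) :
    heatKernel ε x = gaussianPDFReal 0 ε.toNNReal x := by
  rw [heatKernel, gaussianPDFReal, Real.coe_toNNReal _ hε, sub_zero, Real.sqrt_eq_rpow,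
    ← Real.rpow_neg (by positivity)]
  norm_num

theorem heatKernel_nonneg (hε : 0 ≤ ε) (x : ℝ) : 0 ≤ heatKernel ε x := by
  rw [heatKernel_eq_gaussianPDFReal hε]
  exact gaussianPDFReal_nonneg _ _ _

theorem lintegral_ofReal_heatKernel (hε : 0 < ε) :
    ∫⁻ x, ENNReal.ofReal (heatKernel ε x) = 1 := by
  simp_rw [heatKernel_eq_gaussianPDFReal hε.le]
  exact lintegral_gaussianPDFReal_eq_one 0 (by simpa using hε)

theorem heatKernel_mul_abs_le_one (hε : 0 < ε) (x : ℝ) : heatKernel ε x * |x| ≤ 1 := by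
  refine (pow_le_one_iff_of_nonneg (mul_nonneg (heatKernel_nonneg hε.le x) (abs_nonneg x))
    two_ne_zero).1 ?_
  have hsq : (heatKernel ε x * |x|) ^ 2 =
      (2 * Real.pi * ε)⁻¹ * (x ^ 2 * Real.exp (-(x ^ 2 / ε))) := by
    rw [heatKernel, mul_pow, mul_pow, sq_abs, ← Real.rpow_natCast, ← Real.rpow_mul (by positivity),
      ← Real.exp_nat_mul]
    norm_num [Real.rpow_neg_one]
    ring_nf
  have hexp : x ^ 2 * Real.exp (-(x ^ 2 / ε)) ≤ ε := by
    rw [Real.exp_neg, ← div_eq_mul_inv, div_le_iff₀ (Real.exp_pos _)]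
    have := Real.add_one_le_exp (x ^ 2 / ε)
    calc x ^ 2 = ε * (x ^ 2 / ε) := by field_simp
      _ ≤ ε * Real.exp (x ^ 2 / ε) := by gcongr; linarith
  rw [hsq, inv_mul_le_iff₀ (by positivity)]
  nlinarith [Real.pi_gt_three]

theorem ofReal_heatKernel_le_enorm_inv (hε : 0 < ε) (x : ℝ) :
    ENNReal.ofReal (heatKernel ε x) ≤ ‖x‖ₑ⁻¹ := by
  rw [ENNReal.le_inv_iff_mul_le, Real.enorm_eq_ofReal_abs,
    ← ENNReal.ofReal_mul (heatKernel_nonneg hε.le x)]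
  exact ENNReal.ofReal_le_one.2 (heatKernel_mul_abs_le_one hε x)

theorem measurable_heatKernel : Measurable (heatKernel ε) := by
  unfold heatKernel
  fun_prop

end HeatKernel

/-- For `β ∈ (0,1)` there is `C > 0` such that for all `ε, ε' > 0` and `x₁ ≠ x₂`,
`∫_{ℝ²} p_ε(x₁+y₁) p_{ε'}(x₂+y₂) |y₁-y₂|^{-β} dy₁ dy₂ ≤ C |x₁-x₂|^{-β}`. -/
theorem heatKernel_convolution_bound (β : ℝ) (hβ : β ∈ Set.Ioo (0 : ℝ) 1) :
    ∃ C : ℝ, 0 < C ∧ ∀ ε ε' x₁ x₂ : ℝ, 0 < ε → 0 < ε' → x₁ ≠ x₂ →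
      ∫⁻ y : ℝ × ℝ,
          ENNReal.ofReal (heatKernel ε (x₁ + y.1) * heatKernel ε' (x₂ + y.2) *
            |y.1 - y.2| ^ (-β)) ≤
        ENNReal.ofReal (C * |x₁ - x₂| ^ (-β)) := by
  set K := 2 ^ β * (1 + 2 / (1 - β))
  have hK : 0 < K := by
    have : 0 < 1 - β := by linarith [hβ.2]
    positivity
  refine ⟨K ^ 2, by positivity, fun ε ε' x₁ x₂ hε hε' hne => ?_⟩
  calc ∫⁻ y : ℝ × ℝ, ENNReal.ofReal (heatKernel ε (x₁ + y.1) * heatKernel ε' (x₂ + y.2) *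
          |y.1 - y.2| ^ (-β))
      ≤ ∫⁻ y : ℝ × ℝ, ENNReal.ofReal (heatKernel ε (x₁ + y.1)) * ‖y.1 - y.2‖ₑ ^ (-β) *
          ENNReal.ofReal (heatKernel ε' (x₂ + y.2)) :=
        lintegral_mono fun y =>
          ofReal_mul_mul_abs_rpow_le (heatKernel_nonneg hε.le _) (heatKernel_nonneg hε'.le _) _ _
    _ = ∫⁻ y : ℝ × ℝ, ENNReal.ofReal (heatKernel ε y.1) * ‖y.1 - y.2 - (x₁ - x₂)‖ₑ ^ (-β) *
          ENNReal.ofReal (heatKernel ε' y.2) := by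
        conv_rhs => rw [← lintegral_add_left_eq_self _ (x₁, x₂)]
        refine lintegral_congr fun y => ?_
        simp only [Prod.fst_add, Prod.snd_add]
        rw [show x₁ + y.1 - (x₂ + y.2) - (x₁ - x₂) = y.1 - y.2 by ring]
    _ ≤ ENNReal.ofReal K ^ 2 * ‖x₁ - x₂‖ₑ ^ (-β) :=
        lintegral_prod_mul_enorm_sub_sub_rpow_neg_le measurable_heatKernel.ennreal_ofReal
          measurable_heatKernel.ennreal_ofReal (lintegral_ofReal_heatKernel hε).le
          (lintegral_ofReal_heatKernel hε').le (ofReal_heatKernel_le_enorm_inv hε)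
          (ofReal_heatKernel_le_enorm_inv hε') hβ _
    _ = ENNReal.ofReal (K ^ 2 * |x₁ - x₂| ^ (-β)) := by
        rw [Real.enorm_eq_ofReal_abs, ENNReal.ofReal_rpow_of_pos (abs_pos.2 (sub_ne_zero.2 hne)),
          ← ENNReal.ofReal_pow hK.le, ← ENNReal.ofReal_mul (by positivity)]
end

section
/- Let β ∈ (0, 1). There exists a constant C > 0 such that for every t > 0, all δ > 0, δ′ > 0, and all s₁, s₂ ∈ [0, t] with s₁ ≠ s₂, ∫₀^t ∫₀^t φ_δ(t − s₁ − r₁) φ_{δ′}(t − s₂ − r₂) |r₁ − r₂|^{−β} dr₁ dr₂ ≤ C |s₁ − s₂|^{−β}. -/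
/-!
Write `a = t - s₁`, `b = t - s₂`, so that `|a - b| = |s₁ - s₂|`, and enlarge the domain of
integration from `[0, t]²` to `ℝ²`. If `|a - b| > 2 (δ + δ')`, then `|r₁ - r₂| ≥ |a - b| / 2` on
the support of the two bumps, each of which has mass one. Otherwise `max δ δ' ≥ |a - b| / 4`;
integrate first against the wider bump: it has height `L⁻¹` on a window of length
`L = max δ δ'`, and the integral of `|x - c|^(-β)` over any interval of length `L` is at most
`3 / (1 - β) · L^(1 - β)`, whichever `c`; this gives `3 / (1 - β) · L^(-β)`.
-/

open MeasureTheory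

/-- The rectangular approximation of the Dirac delta: `φ_δ = δ⁻¹ 1_{[0,δ]}`. -/
noncomputable def phiApprox (δ x : ℝ) : ℝ := if x ∈ Set.Icc 0 δ then δ⁻¹ else 0

open Set
open scoped ENNReal

section PhiApprox

variable {δ : ℝ}

lemma phiApprox_nonneg (hδ : 0 ≤ δ) (x : ℝ) : 0 ≤ phiApprox δ x := by
  unfold phiApprox
  split_ifs <;> positivity

@[fun_prop]
lemma measurable_phiApprox (δ : ℝ) : Measurable (phiApprox δ) :=
  Measurable.ite measurableSet_Icc measurable_const measurable_const

lemma mem_Icc_of_phiApprox_ne_zero {x : ℝ} (h : phiApprox δ x ≠ 0) : x ∈ Icc 0 δ := by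
  by_contra hx
  exact h (if_neg hx)

lemma ofReal_phiApprox_sub_mul (δ a : ℝ) (g : ℝ → ℝ) (x : ℝ) :
    ENNReal.ofReal (phiApprox δ (a - x) * g x) =
      (Icc (a - δ) a).indicator (fun y => ENNReal.ofReal (δ⁻¹ * g y)) x := by
  have hmem : a - x ∈ Icc 0 δ ↔ x ∈ Icc (a - δ) a := by
    simp only [mem_Icc]
    constructor <;> rintro ⟨h₁, h₂⟩ <;> constructor <;> linarith
  by_cases hx : x ∈ Icc (a - δ) a
  · rw [indicator_of_mem hx, phiApprox, if_pos (hmem.2 hx)]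
  · rw [indicator_of_notMem hx, phiApprox, if_neg (mt hmem.1 hx), zero_mul, ENNReal.ofReal_zero]

lemma lintegral_ofReal_phiApprox_sub (hδ : 0 < δ) (a : ℝ) :
    ∫⁻ x, ENNReal.ofReal (phiApprox δ (a - x)) = 1 := by
  have h := ofReal_phiApprox_sub_mul δ a 1
  simp only [Pi.one_apply, mul_one] at h
  simp_rw [h]
  rw [lintegral_indicator_const measurableSet_Icc, Real.volume_Icc, sub_sub_cancel,
    ← ENNReal.ofReal_mul (inv_nonneg.2 hδ.le), inv_mul_cancel₀ hδ.ne', ENNReal.ofReal_one]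

end PhiApprox

section RieszKernel

variable {β : ℝ}

lemma lintegral_Icc_rpow_neg (hβ : β < 1) {L : ℝ} (hL : 0 ≤ L) :
    ∫⁻ y in Icc 0 L, ENNReal.ofReal (y ^ (-β)) = ENNReal.ofReal (L ^ (1 - β) / (1 - β)) := by
  have hβ' : -1 < -β := by linarith
  rw [← ofReal_integral_eq_lintegral_ofReal, integral_Icc_eq_integral_Ioc,
    ← intervalIntegral.integral_of_le hL, integral_rpow (Or.inl hβ'),
    Real.zero_rpow (by linarith), sub_zero, neg_add_eq_sub]
  · exact (integrableOn_Icc_iff_integrableOn_Ioc).2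
      (intervalIntegral.intervalIntegrable_rpow' hβ').1
  · filter_upwards [ae_restrict_mem measurableSet_Icc] with y hy
    exact Real.rpow_nonneg hy.1 _

lemma setLIntegral_Icc_comp_abs_sub_le (f : ℝ → ℝ≥0∞) (c L : ℝ) :
    ∫⁻ x in Icc (c - L) (c + L), f |x - c| ≤ 2 * ∫⁻ y in Icc 0 L, f y := by
  have hleft : ∫⁻ x in Icc (c - L) c, f |x - c| = ∫⁻ y in Icc 0 L, f y := by
    rw [← (Measure.measurePreserving_sub_left volume c).setLIntegral_comp_preimage_emb
      (measurableEmbedding_subLeft c) f (Icc 0 L), preimage_const_sub_Icc, sub_zero]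
    refine setLIntegral_congr_fun measurableSet_Icc fun x hx => ?_
    rw [abs_sub_comm, abs_of_nonneg (sub_nonneg.2 hx.2)]
  have hright : ∫⁻ x in Icc c (c + L), f |x - c| = ∫⁻ y in Icc 0 L, f y := by
    rw [← (measurePreserving_sub_right volume c).setLIntegral_comp_preimage_emb
      (measurableEmbedding_subRight c) f (Icc 0 L), preimage_sub_const_Icc, zero_add, add_comm]
    refine setLIntegral_congr_fun measurableSet_Icc fun x hx => ?_
    rw [abs_of_nonneg (sub_nonneg.2 hx.1)]
  calc ∫⁻ x in Icc (c - L) (c + L), f |x - c|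
      ≤ ∫⁻ x in Icc (c - L) c ∪ Icc c (c + L), f |x - c| :=
        lintegral_mono_set Icc_subset_Icc_union_Icc
    _ ≤ (∫⁻ x in Icc (c - L) c, f |x - c|) + ∫⁻ x in Icc c (c + L), f |x - c| :=
        lintegral_union_le _ _ _
    _ = 2 * ∫⁻ y in Icc 0 L, f y := by rw [hleft, hright, two_mul]

lemma lintegral_Icc_abs_sub_rpow_neg_le (hβ₀ : 0 ≤ β) (hβ₁ : β < 1) (a c : ℝ) {L : ℝ}
    (hL : 0 < L) :
    ∫⁻ x in Icc a (a + L), ENNReal.ofReal (|x - c| ^ (-β)) ≤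
      ENNReal.ofReal (3 / (1 - β) * L ^ (1 - β)) := by
  set near : ℝ → ℝ≥0∞ :=
    (Icc (c - L) (c + L)).indicator fun x => ENNReal.ofReal (|x - c| ^ (-β)) with hnear_def
  have hsplit : ∀ x, ENNReal.ofReal (|x - c| ^ (-β)) ≤ near x + ENNReal.ofReal (L ^ (-β)) := by
    intro x
    by_cases hx : x ∈ Icc (c - L) (c + L)
    · rw [hnear_def, indicator_of_mem hx]
      exact le_self_add
    · have hfar : L ≤ |x - c| := by
        simp only [mem_Icc, not_and_or, not_le] at hx
        rcases hx with h | h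
        · exact le_abs.2 (Or.inr (by linarith))
        · exact le_abs.2 (Or.inl (by linarith))
      rw [hnear_def, indicator_of_notMem hx, zero_add]
      exact ENNReal.ofReal_le_ofReal (Real.rpow_le_rpow_of_nonpos hL hfar (by linarith))
  have hnear : ∫⁻ x, near x ≤ 2 * ENNReal.ofReal (L ^ (1 - β) / (1 - β)) := by
    rw [lintegral_indicator measurableSet_Icc, ← lintegral_Icc_rpow_neg hβ₁ hL.le]
    exact setLIntegral_Icc_comp_abs_sub_le (fun y => ENNReal.ofReal (y ^ (-β))) c L
  have hP : L ^ (-β) * L = L ^ (1 - β) := by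
    rw [← Real.rpow_add_one hL.ne', neg_add_eq_sub]
  have hP_le : L ^ (1 - β) ≤ L ^ (1 - β) / (1 - β) :=
    le_div_self (by positivity) (by linarith) (by linarith)
  calc ∫⁻ x in Icc a (a + L), ENNReal.ofReal (|x - c| ^ (-β))
      ≤ ∫⁻ x in Icc a (a + L), (near x + ENNReal.ofReal (L ^ (-β))) := lintegral_mono hsplit
    _ = (∫⁻ x in Icc a (a + L), near x) + ENNReal.ofReal (L ^ (-β)) * ENNReal.ofReal L := by
        rw [lintegral_add_right _ measurable_const, setLIntegral_const, Real.volume_Icc,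
          add_sub_cancel_left]
    _ ≤ 2 * ENNReal.ofReal (L ^ (1 - β) / (1 - β)) + ENNReal.ofReal (L ^ (1 - β)) := by
        rw [← ENNReal.ofReal_mul (by positivity), hP]
        gcongr
        exact (setLIntegral_le_lintegral _ _).trans hnear
    _ ≤ ENNReal.ofReal (3 / (1 - β) * L ^ (1 - β)) := by
        rw [← ENNReal.ofReal_ofNat 2, ← ENNReal.ofReal_mul zero_le_two,
          ← ENNReal.ofReal_add (by positivity) (by positivity)]
        refine ENNReal.ofReal_le_ofReal ?_
        calc 2 * (L ^ (1 - β) / (1 - β)) + L ^ (1 - β)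
            ≤ 2 * (L ^ (1 - β) / (1 - β)) + L ^ (1 - β) / (1 - β) := by gcongr
          _ = 3 / (1 - β) * L ^ (1 - β) := by ring

lemma lintegral_phiApprox_mul_abs_sub_rpow_neg_le (hβ₀ : 0 ≤ β) (hβ₁ : β < 1) {δ : ℝ}
    (hδ : 0 < δ) (b c : ℝ) :
    ∫⁻ x, ENNReal.ofReal (phiApprox δ (b - x) * |x - c| ^ (-β)) ≤
      ENNReal.ofReal (3 / (1 - β) * δ ^ (-β)) := by
  simp_rw [ofReal_phiApprox_sub_mul δ b (fun x => |x - c| ^ (-β)),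
    ENNReal.ofReal_mul (inv_nonneg.2 hδ.le)]
  rw [lintegral_indicator measurableSet_Icc, lintegral_const_mul' _ _ ENNReal.ofReal_ne_top]
  calc ENNReal.ofReal δ⁻¹ * ∫⁻ x in Icc (b - δ) b, ENNReal.ofReal (|x - c| ^ (-β))
      ≤ ENNReal.ofReal δ⁻¹ * ENNReal.ofReal (3 / (1 - β) * δ ^ (1 - β)) := by
        gcongr
        simpa using lintegral_Icc_abs_sub_rpow_neg_le hβ₀ hβ₁ (b - δ) c hδ
    _ = ENNReal.ofReal (3 / (1 - β) * δ ^ (-β)) := by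
        rw [← ENNReal.ofReal_mul (by positivity), Real.rpow_sub hδ, Real.rpow_one,
          Real.rpow_neg hδ.le]
        congr 1
        field_simp

end RieszKernel

lemma div_rpow_neg_le_mul {c k β : ℝ} (hc : 0 ≤ c) (hk : 1 ≤ k) (hβ : β ≤ 1) :
    (c / k) ^ (-β) ≤ k * c ^ (-β) := by
  rw [Real.div_rpow hc (by linarith), Real.rpow_neg (by linarith : (0 : ℝ) ≤ k) β,
    div_inv_eq_mul, mul_comm]
  gcongr
  exact Real.rpow_le_self_of_one_le hk hβ


noncomputable def phiRieszIntegral (β δ δ' a b : ℝ) : ℝ≥0∞ :=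
  ∫⁻ r₁, ∫⁻ r₂,
    ENNReal.ofReal (phiApprox δ (a - r₁) * phiApprox δ' (b - r₂) * |r₁ - r₂| ^ (-β))

section PhiRieszIntegral

variable {β δ δ' : ℝ}

lemma phiRieszIntegral_comm (β δ δ' a b : ℝ) :
    phiRieszIntegral β δ δ' a b = phiRieszIntegral β δ' δ b a := by
  unfold phiRieszIntegral
  rw [lintegral_lintegral_swap (Measurable.aemeasurable (by fun_prop))]
  refine lintegral_congr fun r₂ => lintegral_congr fun r₁ => ?_
  rw [abs_sub_comm, mul_comm (phiApprox δ _)]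

lemma phiRieszIntegral_le_right (hβ₀ : 0 ≤ β) (hβ₁ : β < 1) (hδ : 0 < δ) (hδ' : 0 < δ')
    (a b : ℝ) : phiRieszIntegral β δ δ' a b ≤ ENNReal.ofReal (3 / (1 - β) * δ' ^ (-β)) := by
  calc phiRieszIntegral β δ δ' a b
      ≤ ∫⁻ r₁, ENNReal.ofReal (phiApprox δ (a - r₁)) *
          ENNReal.ofReal (3 / (1 - β) * δ' ^ (-β)) := by
        refine lintegral_mono fun r₁ => ?_
        simp_rw [mul_assoc, ENNReal.ofReal_mul (phiApprox_nonneg hδ.le _)]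
        rw [lintegral_const_mul' _ _ ENNReal.ofReal_ne_top]
        gcongr
        simpa only [abs_sub_comm r₁] using
          lintegral_phiApprox_mul_abs_sub_rpow_neg_le hβ₀ hβ₁ hδ' b r₁
    _ = ENNReal.ofReal (3 / (1 - β) * δ' ^ (-β)) := by
        rw [lintegral_mul_const' _ _ ENNReal.ofReal_ne_top, lintegral_ofReal_phiApprox_sub hδ,
          one_mul]

lemma phiRieszIntegral_le_max (hβ₀ : 0 ≤ β) (hβ₁ : β < 1) (hδ : 0 < δ) (hδ' : 0 < δ')
    (a b : ℝ) :
    phiRieszIntegral β δ δ' a b ≤ ENNReal.ofReal (3 / (1 - β) * max δ δ' ^ (-β)) := by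
  rcases le_total δ δ' with h | h
  · rw [max_eq_right h]
    exact phiRieszIntegral_le_right hβ₀ hβ₁ hδ hδ' a b
  · rw [max_eq_left h, phiRieszIntegral_comm]
    exact phiRieszIntegral_le_right hβ₀ hβ₁ hδ' hδ b a

lemma le_abs_sub_of_phiApprox_mul_ne_zero {a b r₁ r₂ : ℝ}
    (h : phiApprox δ (a - r₁) * phiApprox δ' (b - r₂) ≠ 0) :
    |a - b| - (δ + δ') ≤ |r₁ - r₂| := by
  obtain ⟨h₁, h₂⟩ := mul_ne_zero_iff.1 h
  obtain ⟨ha₀, ha₁⟩ := mem_Icc_of_phiApprox_ne_zero h₁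
  obtain ⟨hb₀, hb₁⟩ := mem_Icc_of_phiApprox_ne_zero h₂
  have hdiff : |(a - r₁) - (b - r₂)| ≤ δ + δ' := abs_le.2 ⟨by linarith, by linarith⟩
  calc |a - b| - (δ + δ') ≤ |a - b| - |(a - r₁) - (b - r₂)| := by gcongr
    _ ≤ |(a - b) - ((a - r₁) - (b - r₂))| := abs_sub_abs_le_abs_sub _ _
    _ = |r₁ - r₂| := by ring_nf

lemma phiRieszIntegral_le_of_add_le_abs_sub (hβ₀ : 0 ≤ β) (hδ : 0 < δ) (hδ' : 0 < δ')
    {a b ρ : ℝ} (hρ : 0 < ρ) (hsep : ρ + δ + δ' ≤ |a - b|) :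
    phiRieszIntegral β δ δ' a b ≤ ENNReal.ofReal (ρ ^ (-β)) := by
  have hpt : ∀ r₁ r₂,
      ENNReal.ofReal (phiApprox δ (a - r₁) * phiApprox δ' (b - r₂) * |r₁ - r₂| ^ (-β)) ≤
        ENNReal.ofReal (phiApprox δ (a - r₁)) *
          (ENNReal.ofReal (phiApprox δ' (b - r₂)) * ENNReal.ofReal (ρ ^ (-β))) := by
    intro r₁ r₂
    by_cases h : phiApprox δ (a - r₁) * phiApprox δ' (b - r₂) = 0
    · simp [h]
    have hρ_le : ρ ≤ |r₁ - r₂| := by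
      linarith [le_abs_sub_of_phiApprox_mul_ne_zero h]
    rw [← ENNReal.ofReal_mul (phiApprox_nonneg hδ'.le _),
      ← ENNReal.ofReal_mul (phiApprox_nonneg hδ.le _), ← mul_assoc]
    exact ENNReal.ofReal_le_ofReal (mul_le_mul_of_nonneg_left
      (Real.rpow_le_rpow_of_nonpos hρ hρ_le (by linarith))
      (mul_nonneg (phiApprox_nonneg hδ.le _) (phiApprox_nonneg hδ'.le _)))
  calc phiRieszIntegral β δ δ' a b
      ≤ ∫⁻ r₁, ∫⁻ r₂, ENNReal.ofReal (phiApprox δ (a - r₁)) *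
          (ENNReal.ofReal (phiApprox δ' (b - r₂)) * ENNReal.ofReal (ρ ^ (-β))) :=
        lintegral_mono fun r₁ => lintegral_mono fun r₂ => hpt r₁ r₂
    _ = ENNReal.ofReal (ρ ^ (-β)) := by
        rw [lintegral_lintegral_mul (by fun_prop) (by fun_prop),
          lintegral_mul_const' _ _ ENNReal.ofReal_ne_top, lintegral_ofReal_phiApprox_sub hδ,
          lintegral_ofReal_phiApprox_sub hδ', one_mul, one_mul]

lemma phiRieszIntegral_le_mul_abs_sub_rpow_neg (hβ₀ : 0 ≤ β) (hβ₁ : β < 1) (hδ : 0 < δ)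
    (hδ' : 0 < δ') {a b : ℝ} (hab : a ≠ b) :
    phiRieszIntegral β δ δ' a b ≤ ENNReal.ofReal (12 / (1 - β) * |a - b| ^ (-β)) := by
  have h1β : 0 < 1 - β := sub_pos.2 hβ₁
  have hc : 0 < |a - b| := abs_pos.2 (sub_ne_zero.2 hab)
  rcases le_or_gt |a - b| (2 * (δ + δ')) with hnear | hfar
  · refine (phiRieszIntegral_le_max hβ₀ hβ₁ hδ hδ' a b).trans (ENNReal.ofReal_le_ofReal ?_)
    have hmax : |a - b| / 4 ≤ max δ δ' := by linarith [le_max_left δ δ', le_max_right δ δ']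
    calc 3 / (1 - β) * max δ δ' ^ (-β)
        ≤ 3 / (1 - β) * (|a - b| / 4) ^ (-β) := by
          gcongr ?_ * ?_
          exact Real.rpow_le_rpow_of_nonpos (by positivity) hmax (by linarith)
      _ ≤ 3 / (1 - β) * (4 * |a - b| ^ (-β)) := by
          gcongr
          exact div_rpow_neg_le_mul hc.le (by norm_num) hβ₁.le
      _ = 12 / (1 - β) * |a - b| ^ (-β) := by ring
  · refine (phiRieszIntegral_le_of_add_le_abs_sub hβ₀ hδ hδ' (half_pos hc) (by linarith)).trans
      (ENNReal.ofReal_le_ofReal ?_)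
    calc (|a - b| / 2) ^ (-β) ≤ 2 * |a - b| ^ (-β) :=
          div_rpow_neg_le_mul hc.le one_le_two hβ₁.le
      _ ≤ 12 / (1 - β) * |a - b| ^ (-β) := by
          gcongr
          rw [le_div_iff₀ h1β]
          linarith

end PhiRieszIntegral

/-- For `β ∈ (0,1)` there is `C > 0` such that for all `t > 0`, `δ, δ' > 0` and
`s₁ ≠ s₂` in `[0, t]`,
`∫₀^t ∫₀^t φ_δ(t−s₁−r₁) φ_{δ'}(t−s₂−r₂) |r₁−r₂|^{-β} dr₁ dr₂ ≤ C |s₁−s₂|^{-β}`. -/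
theorem phiApprox_convolution_bound (β : ℝ) (hβ : β ∈ Set.Ioo (0 : ℝ) 1) :
    ∃ C : ℝ, 0 < C ∧ ∀ t δ δ' s₁ s₂ : ℝ, 0 < t → 0 < δ → 0 < δ' →
      s₁ ∈ Set.Icc 0 t → s₂ ∈ Set.Icc 0 t → s₁ ≠ s₂ →
      (∫⁻ r₁ in Set.Icc (0 : ℝ) t, ∫⁻ r₂ in Set.Icc (0 : ℝ) t,
          ENNReal.ofReal (phiApprox δ (t - s₁ - r₁) * phiApprox δ' (t - s₂ - r₂) *
            |r₁ - r₂| ^ (-β))) ≤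
        ENNReal.ofReal (C * |s₁ - s₂| ^ (-β)) := by
  obtain ⟨hβ₀, hβ₁⟩ := hβ
  refine ⟨12 / (1 - β), div_pos (by norm_num) (sub_pos.2 hβ₁), ?_⟩
  intro t δ δ' s₁ s₂ _ hδ hδ' _ _ hne
  have hdist : |(t - s₁) - (t - s₂)| = |s₁ - s₂| := by
    rw [sub_sub_sub_cancel_left, abs_sub_comm]
  calc _ ≤ phiRieszIntegral β δ δ' (t - s₁) (t - s₂) :=
        (lintegral_mono fun r₁ => setLIntegral_le_lintegral _ _).trans
          (setLIntegral_le_lintegral _ _)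
    _ ≤ ENNReal.ofReal (12 / (1 - β) * |s₁ - s₂| ^ (-β)) :=
        hdist ▸ phiRieszIntegral_le_mul_abs_sub_rpow_neg hβ₀.le hβ₁ hδ hδ'
          (sub_right_injective.ne hne)
end

section
/- Let α ∈ (0, 2), let κ ∈ (0, 2/α), and let t > 0. There exists a constant C > 0 such that for every h > 0, ∫∫_{{(r,v) ∈ [0,t]² : |r − v| ≤ h^α}} |r − v|^{κ − 1} dr dv + h² ∫∫_{{(r,v) ∈ [0,t]² : |r − v| > h^α}} |r − v|^{κ − 1 − 2/α} dr dv ≤ C h^{ακ}. -/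
/-!
Both integrands depend only on `u = r - v`, so integrating out `v` over all of `ℝ` bounds each
double integral by `2t` times a one-dimensional integral over `u > 0`. With `δ = h^α`, these are
`∫_0^δ u^{κ-1} = δ^κ/κ` and `∫_δ^∞ u^{κ-1-2/α} = δ^{κ-2/α}/(2/α-κ)`, and
`h² δ^{κ-2/α} = δ^κ = h^{ακ}`.
-/

open MeasureTheory Set
open scoped ENNReal

theorem lintegral_comp_abs (g : ℝ → ℝ≥0∞) :
    ∫⁻ x, g |x| = 2 * ∫⁻ x in Ioi 0, g x := by
  have hpos : ∫⁻ x in Ioi 0, g |x| = ∫⁻ x in Ioi 0, g x :=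
    setLIntegral_congr_fun measurableSet_Ioi fun x hx => by rw [abs_of_pos hx]
  have hneg : ∫⁻ x in Iic 0, g |x| = ∫⁻ x in Ioi 0, g |x| := by
    rw [setLIntegral_congr Iio_ae_eq_Iic.symm]
    have := (Measure.measurePreserving_neg (volume : Measure ℝ)).setLIntegral_comp_preimage_emb
      (MeasurableEquiv.neg ℝ).measurableEmbedding (fun x => g |x|) (Ioi 0)
    simpa [abs_neg] using this
  rw [← lintegral_add_compl _ measurableSet_Ioi, compl_Ioi, hneg, hpos, two_mul]

theorem setLIntegral_comp_sub_le {t : ℝ} {S : Set (ℝ × ℝ)} (hS : S ⊆ Icc 0 t ×ˢ univ)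
    {F : ℝ → ℝ≥0∞} (hF : Measurable F) :
    ∫⁻ p in S, F (p.1 - p.2) ≤ ENNReal.ofReal t * ∫⁻ u, F u :=
  calc ∫⁻ p in S, F (p.1 - p.2) ≤ ∫⁻ p in Icc 0 t ×ˢ univ, F (p.1 - p.2) :=
        lintegral_mono_set hS
    _ = ∫⁻ r in Icc 0 t, ∫⁻ v, F (r - v) := by
      rw [Measure.volume_eq_prod, ← Measure.prod_restrict, Measure.restrict_univ,
        lintegral_prod _ (by fun_prop)]
    _ = ENNReal.ofReal t * ∫⁻ u, F u := by
      simp_rw [lintegral_sub_left_eq_self]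
      rw [setLIntegral_const, Real.volume_Icc, sub_zero, mul_comm]

theorem setLIntegral_comp_abs_sub_le {t : ℝ} {S : Set (ℝ × ℝ)} {A : Set ℝ}
    (hA : MeasurableSet A)
    (hS : ∀ p ∈ S, p.1 ∈ Icc 0 t ∧ |p.1 - p.2| ∈ A) {F : ℝ → ℝ≥0∞} (hF : Measurable F) :
    ∫⁻ p in S, F |p.1 - p.2| ≤ 2 * ENNReal.ofReal t * ∫⁻ u in A ∩ Ioi 0, F u :=
  calc ∫⁻ p in S, F |p.1 - p.2| ≤ ∫⁻ p in S, A.indicator F |p.1 - p.2| :=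
        setLIntegral_mono (by fun_prop (disch := exact hA)) fun p hp =>
          (indicator_of_mem (hS p hp).2 F).ge
    _ ≤ ENNReal.ofReal t * ∫⁻ u, A.indicator F |u| :=
        setLIntegral_comp_sub_le (fun p hp => ⟨(hS p hp).1, trivial⟩)
          ((hF.indicator hA).comp measurable_abs)
    _ = 2 * ENNReal.ofReal t * ∫⁻ u in A ∩ Ioi 0, F u := by
      rw [lintegral_comp_abs, lintegral_indicator hA, Measure.restrict_restrict hA]
      ring

theorem lintegral_Ioc_rpow_sub_one {γ : ℝ} (hγ : 0 < γ) {δ : ℝ} (hδ : 0 ≤ δ) :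
    ∫⁻ u in Ioc 0 δ, ENNReal.ofReal (u ^ (γ - 1)) = ENNReal.ofReal (δ ^ γ / γ) := by
  have hint : IntegrableOn (fun u : ℝ => u ^ (γ - 1)) (Ioc 0 δ) := by
    rw [← intervalIntegrable_iff_integrableOn_Ioc_of_le hδ]
    exact intervalIntegral.intervalIntegrable_rpow' (by linarith)
  rw [← ofReal_integral_eq_lintegral_ofReal hint
    (ae_restrict_of_forall_mem measurableSet_Ioc fun u hu => Real.rpow_nonneg hu.1.le _),
    ← intervalIntegral.integral_of_le hδ, integral_rpow (Or.inl (by linarith)),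
    sub_add_cancel, Real.zero_rpow hγ.ne', sub_zero]

theorem lintegral_Ioi_rpow_sub_one {γ : ℝ} (hγ : γ < 0) {δ : ℝ} (hδ : 0 < δ) :
    ∫⁻ u in Ioi δ, ENNReal.ofReal (u ^ (γ - 1)) = ENNReal.ofReal (δ ^ γ / -γ) := by
  rw [← ofReal_integral_eq_lintegral_ofReal (integrableOn_Ioi_rpow_of_lt (by linarith) hδ)
    (ae_restrict_of_forall_mem measurableSet_Ioi fun u hu =>
      Real.rpow_nonneg (hδ.le.trans hu.le) _),
    integral_Ioi_rpow_of_lt (by linarith) hδ, sub_add_cancel, neg_div, div_neg]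

theorem lintegral_abs_sub_rpow_near_diagonal_le {t δ γ : ℝ} (ht : 0 ≤ t) (hδ : 0 ≤ δ)
    (hγ : 0 < γ) :
    ∫⁻ p in {p : ℝ × ℝ | p.1 ∈ Icc 0 t ∧ p.2 ∈ Icc 0 t ∧ |p.1 - p.2| ≤ δ},
        ENNReal.ofReal (|p.1 - p.2| ^ (γ - 1)) ≤ ENNReal.ofReal (2 * t * (δ ^ γ / γ)) :=
  calc _ ≤ 2 * ENNReal.ofReal t * ∫⁻ u in Iic δ ∩ Ioi 0, ENNReal.ofReal (u ^ (γ - 1)) :=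
        setLIntegral_comp_abs_sub_le (F := fun u => ENNReal.ofReal (u ^ (γ - 1)))
          measurableSet_Iic (fun p hp => ⟨hp.1, hp.2.2⟩) (by fun_prop)
    _ = ENNReal.ofReal (2 * t * (δ ^ γ / γ)) := by
      rw [Iic_inter_Ioi, lintegral_Ioc_rpow_sub_one hγ hδ,
        ENNReal.ofReal_mul (by positivity), ENNReal.ofReal_mul zero_le_two, ENNReal.ofReal_ofNat]

theorem lintegral_abs_sub_rpow_off_diagonal_le {t δ γ : ℝ} (ht : 0 ≤ t) (hδ : 0 < δ)
    (hγ : γ < 0) :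
    ∫⁻ p in {p : ℝ × ℝ | p.1 ∈ Icc 0 t ∧ p.2 ∈ Icc 0 t ∧ δ < |p.1 - p.2|},
        ENNReal.ofReal (|p.1 - p.2| ^ (γ - 1)) ≤ ENNReal.ofReal (2 * t * (δ ^ γ / -γ)) :=
  calc _ ≤ 2 * ENNReal.ofReal t * ∫⁻ u in Ioi δ ∩ Ioi 0, ENNReal.ofReal (u ^ (γ - 1)) :=
        setLIntegral_comp_abs_sub_le (F := fun u => ENNReal.ofReal (u ^ (γ - 1)))
          measurableSet_Ioi (fun p hp => ⟨hp.1, hp.2.2⟩) (by fun_prop)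
    _ = ENNReal.ofReal (2 * t * (δ ^ γ / -γ)) := by
      rw [Ioi_inter_Ioi, max_eq_left hδ.le, lintegral_Ioi_rpow_sub_one hγ hδ,
        ENNReal.ofReal_mul (by positivity), ENNReal.ofReal_mul zero_le_two, ENNReal.ofReal_ofNat]

/-- The spatial-increment estimate: for `α ∈ (0,2)`, `κ ∈ (0, 2/α)` and `t > 0` there is
`C > 0` such that for all `h > 0`,
`∫∫_{|r−v|≤h^α} |r−v|^{κ−1} + h² ∫∫_{|r−v|>h^α} |r−v|^{κ−1−2/α} ≤ C h^{ακ}`. -/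
theorem spatial_increment_estimate (α κ t : ℝ) (hα : α ∈ Set.Ioo (0 : ℝ) 2)
    (hκ : κ ∈ Set.Ioo (0 : ℝ) (2 / α)) (ht : 0 < t) :
    ∃ C : ℝ, 0 < C ∧ ∀ h : ℝ, 0 < h →
      (∫⁻ p in {p : ℝ × ℝ | p.1 ∈ Set.Icc 0 t ∧ p.2 ∈ Set.Icc 0 t ∧ |p.1 - p.2| ≤ h ^ α},
          ENNReal.ofReal (|p.1 - p.2| ^ (κ - 1))) +
        ENNReal.ofReal (h ^ 2) *
          (∫⁻ p in {p : ℝ × ℝ | p.1 ∈ Set.Icc 0 t ∧ p.2 ∈ Set.Icc 0 t ∧ h ^ α < |p.1 - p.2|},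
            ENNReal.ofReal (|p.1 - p.2| ^ (κ - 1 - 2 / α))) ≤
      ENNReal.ofReal (C * h ^ (α * κ)) := by
  obtain ⟨hα0, -⟩ := hα
  obtain ⟨hκ0, hκα⟩ := hκ
  have hγ : κ - 2 / α < 0 := by linarith
  have hγ' : 0 < 2 / α - κ := by linarith
  refine ⟨2 * t / κ + 2 * t / (2 / α - κ), by positivity, fun h hh => ?_⟩
  have hδ : 0 < h ^ α := Real.rpow_pos_of_pos hh α
  have near := lintegral_abs_sub_rpow_near_diagonal_le ht.le hδ.le hκ0
  have far := lintegral_abs_sub_rpow_off_diagonal_le ht.le hδ hγ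
  rw [sub_right_comm, neg_sub] at far
  have hnear_pow : (h ^ α) ^ κ = h ^ (α * κ) := (Real.rpow_mul hh.le α κ).symm
  have hfar_pow : h ^ 2 * (h ^ α) ^ (κ - 2 / α) = h ^ (α * κ) := by
    rw [← Real.rpow_mul hh.le, ← Real.rpow_two, ← Real.rpow_add hh]
    congr 1
    field_simp
    ring
  calc _ ≤ ENNReal.ofReal (2 * t * ((h ^ α) ^ κ / κ)) + ENNReal.ofReal (h ^ 2) *
        ENNReal.ofReal (2 * t * ((h ^ α) ^ (κ - 2 / α) / (2 / α - κ))) := by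
        gcongr
    _ = _ := by
      rw [← ENNReal.ofReal_mul (by positivity),
        ← ENNReal.ofReal_add (by positivity) (by positivity)]
      congr 1
      linear_combination (2 * t / κ) * hnear_pow + (2 * t / (2 / α - κ)) * hfar_pow
end
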